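/- Let p ≥ 2 be an integer and let a_0, ..., a_{p−1} be complex numbers with a_0 + a_1 + ... + a_{p−1} = 0. Then for every positive integer N, the polynomial F_N(x; A) = ∑_{n=0}^{p^N − 1} a_{v_p(n)} x^n is divisible by (1 − x)^N; equivalently, F_N has a zero of order at least N at x = 1. -/

import Mathlib

open Polynomial

/-- The generalized Prouhet–Thue–Morse sequence: sum of base-`p` digits of `n`, mod `p`. -/
def vp (p n : ℕ) : ℕ := (Nat.digits p n).sum % p

/-- `F_N(x; A) = ∑_{n=0}^{p^N - 1} a_{v_p(n)} x^n`. -/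
noncomputable def FN (p : ℕ) (a : ℕ → ℂ) (N : ℕ) : Polynomial ℂ :=
  ∑ n ∈ Finset.range (p ^ N), C (a (vp p n)) * X ^ n

lemma digitsum_rec (p : ℕ) (hp : 2 ≤ p) (n : ℕ) :
    (Nat.digits p n).sum = n % p + (Nat.digits p (n / p)).sum := by
  rcases Nat.eq_zero_or_pos n with h | h
  · simp [h]
  · rw [Nat.digits_def' (by omega : 1 < p) h]; simp

lemma digitsum_add (p : ℕ) (hp : 2 ≤ p) (k : ℕ) (hk : k < p) :
    ∀ N, ∀ m < p ^ N,
      (Nat.digits p (m + k * p ^ N)).sum = (Nat.digits p m).sum + k := by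
  intro N
  induction N with
  | zero =>
    intro m hm
    simp only [pow_zero, Nat.lt_one_iff] at hm
    subst hm
    rcases Nat.eq_zero_or_pos k with h | h
    · simp [h]
    · simp only [pow_zero, mul_one, Nat.zero_add]
      rw [Nat.digits_def' (by omega : 1 < p) h, Nat.mod_eq_of_lt hk,
        Nat.div_eq_of_lt hk]
      simp
  | succ N ih =>
    intro m hm
    have hpow : p ^ (N + 1) = p ^ N * p := pow_succ p N
    rw [digitsum_rec p hp, digitsum_rec p hp m]
    have h1 : (m + k * p ^ (N + 1)) % p = m % p := by
      rw [hpow, ← mul_assoc, Nat.add_mul_mod_self_right]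
    have h2 : (m + k * p ^ (N + 1)) / p = m / p + k * p ^ N := by
      rw [hpow, ← mul_assoc, Nat.add_mul_div_right _ _ (by omega : 0 < p)]
    rw [h1, h2, ih (m / p) (Nat.div_lt_of_lt_mul (by rw [mul_comm, ← hpow]; exact hm))]
    omega

lemma rot1 (p : ℕ) (hp : 1 ≤ p) (f : ℕ → ℂ) :
    ∑ k ∈ Finset.range p, f ((k + 1) % p) = ∑ k ∈ Finset.range p, f k := by
  obtain ⟨q, rfl⟩ : ∃ q, p = q + 1 := ⟨p - 1, by omega⟩
  rw [Finset.sum_range_succ, Finset.sum_range_succ' (fun k => f k) q,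
    Nat.mod_self]
  congr 1
  refine Finset.sum_congr rfl fun k hk => ?_
  rw [Nat.mod_eq_of_lt (by simp at hk; omega)]

lemma shift_sum (p : ℕ) (hp : 2 ≤ p) (a : ℕ → ℂ) (i : ℕ) :
    ∑ k ∈ Finset.range p, a ((i + k) % p) = ∑ j ∈ Finset.range p, a j := by
  induction i with
  | zero =>
    refine Finset.sum_congr rfl fun k hk => ?_
    rw [Nat.zero_add, Nat.mod_eq_of_lt (Finset.mem_range.mp hk)]
  | succ i ih =>
    calc ∑ k ∈ Finset.range p, a ((i + 1 + k) % p)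
        = ∑ k ∈ Finset.range p, a ((i + (k + 1) % p) % p) := by
          refine Finset.sum_congr rfl fun k _ => ?_
          rw [Nat.add_mod_mod]
          have h : i + 1 + k = i + (k + 1) := by omega
          rw [h]
      _ = ∑ k ∈ Finset.range p, a ((i + k) % p) :=
          rot1 p (by omega) (fun x => a ((i + x) % p))
      _ = ∑ j ∈ Finset.range p, a j := ih

lemma sum_range_mul {M : Type*} [AddCommMonoid M] (f : ℕ → M) (q r : ℕ) :
    ∑ n ∈ Finset.range (q * r), f n
      = ∑ k ∈ Finset.range q, ∑ m ∈ Finset.range r, f (m + k * r) := by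
  induction q with
  | zero => simp
  | succ q ih =>
    have h : (q + 1) * r = q * r + r := by ring
    rw [h, Finset.sum_range_succ, ← ih, Finset.range_eq_Ico,
      ← Finset.sum_Ico_consecutive f (Nat.zero_le (q * r)) (Nat.le_add_right _ r)]
    congr 1
    · rw [Finset.range_eq_Ico]
    rw [Finset.sum_Ico_eq_sum_range]
    simp only [Nat.add_sub_cancel_left, ← Finset.range_eq_Ico]
    exact Finset.sum_congr rfl fun m _ => by rw [Nat.add_comm]

lemma key (p : ℕ) (hp : 2 ≤ p) :
    ∀ N, ∀ a : ℕ → ℂ, (∑ i ∈ Finset.range p, a i = 0) →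
      (1 - X : Polynomial ℂ) ^ N ∣ FN p a N := by
  intro N
  induction N with
  | zero => intro a _; simpa using dvd_refl _
  | succ N ih =>
    intro a ha
    have hpos : 0 < p := by omega
    have hsplit : FN p a (N + 1)
        = ∑ k ∈ Finset.range p,
            FN p (fun i => a ((i + k) % p)) N * X ^ (k * p ^ N) := by
      unfold FN
      rw [pow_succ, mul_comm (p ^ N) p, sum_range_mul]
      refine Finset.sum_congr rfl fun k hk => ?_
      rw [Finset.sum_mul]
      refine Finset.sum_congr rfl fun m hm => ?_
      have hv : vp p (m + k * p ^ N) = (vp p m + k) % p := by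
        unfold vp
        rw [digitsum_add p hp k (Finset.mem_range.mp hk) N m (Finset.mem_range.mp hm),
          Nat.mod_add_mod]
      rw [hv, pow_add, mul_assoc]
    have hzero : ∑ k ∈ Finset.range p, FN p (fun i => a ((i + k) % p)) N = 0 := by
      unfold FN
      rw [Finset.sum_comm]
      refine Finset.sum_eq_zero fun m _ => ?_
      rw [← Finset.sum_mul, ← map_sum]
      have : ∑ k ∈ Finset.range p, a ((vp p m + k) % p) = 0 := by
        rw [shift_sum p hp a (vp p m)]; exact ha
      rw [this, map_zero, zero_mul]
    have hrw : FN p a (N + 1)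
        = ∑ k ∈ Finset.range p,
            FN p (fun i => a ((i + k) % p)) N * (X ^ (k * p ^ N) - 1) := by
      rw [hsplit]
      have : ∀ k, FN p (fun i => a ((i + k) % p)) N * X ^ (k * p ^ N)
          = FN p (fun i => a ((i + k) % p)) N * (X ^ (k * p ^ N) - 1)
            + FN p (fun i => a ((i + k) % p)) N := by
        intro k; ring
      simp only [this, Finset.sum_add_distrib, hzero, add_zero]
    rw [hrw, pow_succ]
    refine Finset.dvd_sum fun k _ => ?_
    refine mul_dvd_mul ?_ ?_
    · refine ih _ ?_
      have := shift_sum p hp a k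
      calc ∑ i ∈ Finset.range p, a ((i + k) % p)
          = ∑ i ∈ Finset.range p, a ((k + i) % p) :=
            Finset.sum_congr rfl fun i _ => by rw [Nat.add_comm]
        _ = 0 := by rw [this]; exact ha
    · have hd : (X - 1 : Polynomial ℂ) ∣ X ^ (k * p ^ N) - 1 := by
        simpa using sub_dvd_pow_sub_pow (X : Polynomial ℂ) 1 (k * p ^ N)
      have : (1 - X : Polynomial ℂ) = -(X - 1) := by ring
      rw [this]
      exact (neg_dvd).mpr hd

/-- If the coefficients `a_0, ..., a_{p-1}` sum to zero, then `(1 - x)^N` divides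
`F_N(x; A)`, i.e. `F_N` has a zero of order at least `N` at `x = 1`. -/
theorem one_sub_X_pow_dvd_FN (p : ℕ) (hp : 2 ≤ p) (a : ℕ → ℂ)
    (ha : ∑ i ∈ Finset.range p, a i = 0) (N : ℕ) (hN : 1 ≤ N) :
    (1 - X) ^ N ∣ FN p a N :=
  key p hp N a ha
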